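/- For every n ≥ 1 and every t ∈ [−1,1]^n, the two members of ℓ⁺_n(t) are boxes contained in [−1,1]^{n+1} and their interiors are disjoint; moreover all interval endpoints depend continuously on t, so ℓ⁺_n defines a continuous map from [−1,1]^n to the space of configurations of two little (n+1)-cubes. -/

import Mathlib

/-- The closed box in `ℝ^m` with lower endpoint vector `a` and upper endpoint vector `b`. -/
def RBox {m : ℕ} (a b : Fin m → ℝ) : Set (Fin m → ℝ) :=
  Set.univ.pi fun i => Set.Icc (a i) (b i)

/-- The ambient cube `[-1,1]^m`. -/
def unitCube (m : ℕ) : Set (Fin m → ℝ) := RBox (fun _ => -1) (fun _ => 1)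

/-- `M = max_{1 ≤ j ≤ n} |2 t_j|`. -/
noncomputable def lM {k : ℕ} (t : Fin k → ℝ) : ℝ :=
  Finset.fold max 0 (fun j => |2 * t j|) Finset.univ

/-- Lower endpoint vector of the first box of `ℓ⁺_n(t)`:
`[(1-M)/4, (3-M)/4] × ∏_i [(-1-2t_i)/4, (1-2t_i)/4]`. -/
noncomputable def loopLo₁ {k : ℕ} (t : Fin k → ℝ) : Fin (k+1) → ℝ :=
  Fin.cons ((1 - lM t) / 4) fun i => (-1 - 2 * t i) / 4

/-- Upper endpoint vector of the first box of `ℓ⁺_n(t)`. -/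
noncomputable def loopHi₁ {k : ℕ} (t : Fin k → ℝ) : Fin (k+1) → ℝ :=
  Fin.cons ((3 - lM t) / 4) fun i => (1 - 2 * t i) / 4

/-- Lower endpoint vector of the second box of `ℓ⁺_n(t)`:
`[(-3+M)/4, (-1+M)/4] × ∏_i [(-1+2t_i)/4, (1+2t_i)/4]`. -/
noncomputable def loopLo₂ {k : ℕ} (t : Fin k → ℝ) : Fin (k+1) → ℝ :=
  Fin.cons ((-3 + lM t) / 4) fun i => (-1 + 2 * t i) / 4

/-- Upper endpoint vector of the second box of `ℓ⁺_n(t)`. -/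
noncomputable def loopHi₂ {k : ℕ} (t : Fin k → ℝ) : Fin (k+1) → ℝ :=
  Fin.cons ((-1 + lM t) / 4) fun i => (1 + 2 * t i) / 4

section RBox

variable {m : ℕ}

theorem rBox_subset_rBox {a b c d : Fin m → ℝ} (hca : ∀ i, c i ≤ a i) (hbd : ∀ i, b i ≤ d i) :
    RBox a b ⊆ RBox c d :=
  Set.pi_mono fun i _ => Set.Icc_subset_Icc (hca i) (hbd i)

theorem interior_rBox (a b : Fin m → ℝ) :
    interior (RBox a b) = Set.univ.pi fun i => Set.Ioo (a i) (b i) := by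
  simp only [RBox, interior_pi_set Set.finite_univ, interior_Icc]

theorem disjoint_interior_rBox_of_le {a b c d : Fin m → ℝ} (i : Fin m) (h : b i ≤ c i) :
    Disjoint (interior (RBox a b)) (interior (RBox c d)) := by
  rw [interior_rBox, interior_rBox, Set.disjoint_left]
  intro x hx hx'
  exact (((hx i trivial).2.trans_le h).trans (hx' i trivial).1).false

end RBox

section LM

variable {k : ℕ}

theorem lM_nonneg (t : Fin k → ℝ) : 0 ≤ lM t :=
  (Finset.le_fold_max _).mpr (Or.inl le_rfl)

theorem lM_le {t : Fin k → ℝ} {c : ℝ} (hc : 0 ≤ c) (h : ∀ j, |2 * t j| ≤ c) : lM t ≤ c :=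
  (Finset.fold_max_le _).mpr ⟨hc, fun j _ => h j⟩

theorem lM_le_two {t : Fin k → ℝ} (ht : ∀ j, t j ∈ Set.Icc (-1 : ℝ) 1) : lM t ≤ 2 :=
  lM_le zero_le_two fun j => by
    rw [abs_le]
    constructor <;> linarith [(ht j).1, (ht j).2]

theorem exists_le_abs_of_le_lM {t : Fin k → ℝ} {c : ℝ} (hc : 0 < c) (h : c ≤ lM t) :
    ∃ j, c ≤ |2 * t j| := by
  rcases (Finset.le_fold_max _).mp h with h0 | ⟨j, -, hj⟩
  · exact absurd h0 hc.not_ge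
  · exact ⟨j, hj⟩

@[fun_prop]
theorem continuous_lM : Continuous (lM : (Fin k → ℝ) → ℝ) := by
  unfold lM
  induction (Finset.univ : Finset (Fin k)) using Finset.induction_on with
  | empty => exact continuous_const
  | insert j s hj ih =>
    simpa only [Finset.fold_insert hj] using ((continuous_apply j).const_mul 2).abs.max ih

end LM

section LoopBoxes

variable {k : ℕ}

theorem loopHi₁_sub_loopLo₁ (t : Fin k → ℝ) (i : Fin (k+1)) :
    loopHi₁ t i - loopLo₁ t i = 1 / 2 := by
  cases i using Fin.cases <;> simp only [loopLo₁, loopHi₁, Fin.cons_zero, Fin.cons_succ] <;> ring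

theorem loopHi₂_sub_loopLo₂ (t : Fin k → ℝ) (i : Fin (k+1)) :
    loopHi₂ t i - loopLo₂ t i = 1 / 2 := by
  cases i using Fin.cases <;> simp only [loopLo₂, loopHi₂, Fin.cons_zero, Fin.cons_succ] <;> ring

theorem loopLo₁_lt_loopHi₁ (t : Fin k → ℝ) (i : Fin (k+1)) : loopLo₁ t i < loopHi₁ t i := by
  linarith [loopHi₁_sub_loopLo₁ t i]

theorem loopLo₂_lt_loopHi₂ (t : Fin k → ℝ) (i : Fin (k+1)) : loopLo₂ t i < loopHi₂ t i := by
  linarith [loopHi₂_sub_loopLo₂ t i]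

theorem rBox_loop₁_subset_unitCube {t : Fin k → ℝ} (ht : ∀ j, t j ∈ Set.Icc (-1 : ℝ) 1) :
    RBox (loopLo₁ t) (loopHi₁ t) ⊆ unitCube (k+1) := by
  have hM₀ := lM_nonneg t
  have hM₂ := lM_le_two ht
  refine rBox_subset_rBox (Fin.cases ?_ fun j => ?_) (Fin.cases ?_ fun j => ?_)
  all_goals simp only [loopLo₁, loopHi₁, Fin.cons_zero, Fin.cons_succ]
  · linarith
  · linarith [(ht j).1, (ht j).2]
  · linarith
  · linarith [(ht j).1, (ht j).2]

theorem rBox_loop₂_subset_unitCube {t : Fin k → ℝ} (ht : ∀ j, t j ∈ Set.Icc (-1 : ℝ) 1) :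
    RBox (loopLo₂ t) (loopHi₂ t) ⊆ unitCube (k+1) := by
  have hM₀ := lM_nonneg t
  have hM₂ := lM_le_two ht
  refine rBox_subset_rBox (Fin.cases ?_ fun j => ?_) (Fin.cases ?_ fun j => ?_)
  all_goals simp only [loopLo₂, loopHi₂, Fin.cons_zero, Fin.cons_succ]
  · linarith
  · linarith [(ht j).1, (ht j).2]
  · linarith
  · linarith [(ht j).1, (ht j).2]

/-- If `M ≤ 1` the boxes are separated in coordinate `0`; otherwise they are separated in a
coordinate `j + 1` with `|2 t_j| ≥ 1`, on the side given by the sign of `t_j`. -/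
theorem disjoint_interior_rBox_loop (t : Fin k → ℝ) :
    Disjoint (interior (RBox (loopLo₁ t) (loopHi₁ t)))
      (interior (RBox (loopLo₂ t) (loopHi₂ t))) := by
  rcases le_or_gt (lM t) 1 with hM | hM
  · refine (disjoint_interior_rBox_of_le 0 ?_).symm
    simp only [loopLo₁, loopHi₂, Fin.cons_zero]
    linarith
  obtain ⟨j, hj⟩ := exists_le_abs_of_le_lM one_pos hM.le
  rcases le_abs'.mp hj with hneg | hpos
  · refine (disjoint_interior_rBox_of_le j.succ ?_).symm
    simp only [loopLo₁, loopHi₂, Fin.cons_succ]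
    linarith
  · refine disjoint_interior_rBox_of_le j.succ ?_
    simp only [loopHi₁, loopLo₂, Fin.cons_succ]
    linarith

theorem continuous_loopEndpoints :
    Continuous fun u : Fin k → ℝ => (loopLo₁ u, loopHi₁ u, loopLo₂ u, loopHi₂ u) := by
  unfold loopLo₁ loopHi₁ loopLo₂ loopHi₂
  fun_prop

end LoopBoxes

/-- For every `n ≥ 1` (here `n = m + 1`) and every `t ∈ [-1,1]^n`, the two
members of `ℓ⁺_n(t)` are boxes contained in `[-1,1]^{n+1}` with disjoint interiors, and all
interval endpoints depend continuously on `t`; so `ℓ⁺_n` is a continuous map from `[-1,1]^n`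
to the space of configurations of two little `(n+1)`-cubes. -/
theorem stmt9 (m : ℕ) (t : Fin (m+1) → ℝ) (ht : ∀ j, t j ∈ Set.Icc (-1 : ℝ) 1) :
    (∀ i, loopLo₁ t i < loopHi₁ t i) ∧
    (∀ i, loopLo₂ t i < loopHi₂ t i) ∧
    RBox (loopLo₁ t) (loopHi₁ t) ⊆ unitCube (m+2) ∧
    RBox (loopLo₂ t) (loopHi₂ t) ⊆ unitCube (m+2) ∧
    Disjoint (interior (RBox (loopLo₁ t) (loopHi₁ t)))
      (interior (RBox (loopLo₂ t) (loopHi₂ t))) ∧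
    Continuous (fun u : Fin (m+1) → ℝ =>
      (loopLo₁ u, loopHi₁ u, loopLo₂ u, loopHi₂ u)) :=
  ⟨loopLo₁_lt_loopHi₁ t, loopLo₂_lt_loopHi₂ t, rBox_loop₁_subset_unitCube ht,
    rBox_loop₂_subset_unitCube ht, disjoint_interior_rBox_loop t, continuous_loopEndpoints⟩
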